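/- arXiv:1603.05130 — 4 statements merged into one kernel-verified Lean document; each statement's English description precedes it below -/
import Mathlib

section
/- Let G be a graph containing a vertex v of degree 4 whose neighbors v₁,v₂,v₃,v₄ form a 4-cycle v₁v₂v₃v₄v₁ (so v together with its neighbors forms a 4-wheel), and suppose v₁v₃ ∉ E(G) and v₂v₄ ∉ E(G). Then f(G,4) = f((G−v)∘{v₁,v₃},4) + f((G−v)∘{v₂,v₄},4), where (G−v)∘{x,y} denotes the graph obtained from G−v by identifying the vertices x and y. -/
open SimpleGraph

/-- Number of proper `t`-colorings of `G`. -/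
noncomputable def numCol {V : Type*} (G : SimpleGraph V) (t : ℕ) : ℕ :=
  Nat.card {c : V → Fin t // ∀ a b, G.Adj a b → c a ≠ c b}

/-- Identify the vertices `x` and `y` of `G` into the single vertex `x`. -/
def contract {V : Type*} (G : SimpleGraph V) (x y : V) :
    SimpleGraph {w : V // w ≠ y} :=
  SimpleGraph.fromRel (fun a b => G.Adj a.1 b.1 ∨ (a.1 = x ∧ G.Adj y b.1))

/-- Delete the vertex `v` from `G`, then identify `x` and `y` into `x`. -/
def delContract {V : Type*} (G : SimpleGraph V) (v x y : V) :
    SimpleGraph {w : V // w ≠ v ∧ w ≠ y} :=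
  SimpleGraph.fromRel (fun a b => G.Adj a.1 b.1 ∨ (a.1 = x ∧ G.Adj y b.1))

/-- Add the edge `xy` to `G`. -/
def addEdge {V : Type*} (G : SimpleGraph V) (x y : V) : SimpleGraph V :=
  G ⊔ SimpleGraph.fromEdgeSet {s(x, y)}

/-- `H` is a minor of `G`. -/
def IsMinor {W V : Type*} (H : SimpleGraph W) (G : SimpleGraph V) : Prop :=
  ∃ φ : W → Set V,
    (∀ w, (φ w).Nonempty) ∧
    (∀ w, (G.induce (φ w)).Connected) ∧
    (∀ w w', w ≠ w' → Disjoint (φ w) (φ w')) ∧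
    (∀ w w', H.Adj w w' → ∃ a ∈ φ w, ∃ b ∈ φ w', G.Adj a b)

/-- Wagner's characterization of planarity: no `K₅` and no `K₃,₃` minor. -/
def IsPlanar {V : Type*} (G : SimpleGraph V) : Prop :=
  ¬ IsMinor (completeGraph (Fin 5)) G ∧
  ¬ IsMinor (completeBipartiteGraph (Fin 3) (Fin 3)) G

/-! ### Auxiliary color-picking functions -/

def pmin (x y z : Fin 4) : Fin 4 :=
  if 0 ≠ x ∧ 0 ≠ y ∧ 0 ≠ z then 0
  else if 1 ≠ x ∧ 1 ≠ y ∧ 1 ≠ z then 1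
  else if 2 ≠ x ∧ 2 ≠ y ∧ 2 ≠ z then 2
  else 3

def pmax (x y z : Fin 4) : Fin 4 :=
  if 3 ≠ x ∧ 3 ≠ y ∧ 3 ≠ z then 3
  else if 2 ≠ x ∧ 2 ≠ y ∧ 2 ≠ z then 2
  else if 1 ≠ x ∧ 1 ≠ y ∧ 1 ≠ z then 1
  else 0

lemma pmin_ne : ∀ x y z : Fin 4, pmin x y z ≠ x ∧ pmin x y z ≠ y ∧ pmin x y z ≠ z := by decide
lemma pmax_ne : ∀ x y z : Fin 4, pmax x y z ≠ x ∧ pmax x y z ≠ y ∧ pmax x y z ≠ z := by decide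
lemma pmin_eq : ∀ x y z w : Fin 4, x ≠ y → x ≠ z → y ≠ z → w ≠ x → w ≠ y → w ≠ z →
    pmin x y z = w := by decide
lemma pmax_eq : ∀ x y z w : Fin 4, x ≠ y → x ≠ z → y ≠ z → w ≠ x → w ≠ y → w ≠ z →
    pmax x y z = w := by decide
lemma pmax_eq2 : ∀ a b w : Fin 4, a ≠ b → w ≠ a → w ≠ b → w ≠ pmin a b b →
    pmax a b a = w := by decide
lemma pmax_ne_pmin : ∀ a b : Fin 4, a ≠ b → pmax a b a ≠ pmin a b b := by decide
lemma dichot : ∀ w a b c d : Fin 4, w ≠ a → w ≠ b → w ≠ c → w ≠ d →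
    a ≠ b → b ≠ c → c ≠ d → d ≠ a → a = c ∨ b = d := by decide

open Classical in
noncomputable def extend {V : Type*} (v y : V) (b : {w : V // w ≠ v ∧ w ≠ y} → Fin 4)
    (av ay : Fin 4) : V → Fin 4 :=
  fun w => if hv : w = v then av else if hy : w = y then ay else b ⟨w, hv, hy⟩

lemma extend_v {V : Type*} (v y : V) (b : {w : V // w ≠ v ∧ w ≠ y} → Fin 4) (av ay : Fin 4) :
    extend v y b av ay v = av := by simp [extend]

lemma extend_y {V : Type*} (v y : V) (b : {w : V // w ≠ v ∧ w ≠ y} → Fin 4) (av ay : Fin 4)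
    (h : y ≠ v) : extend v y b av ay y = ay := by simp [extend, h]

lemma extend_other {V : Type*} (v y : V) (b : {w : V // w ≠ v ∧ w ≠ y} → Fin 4) (av ay : Fin 4)
    (w : V) (h1 : w ≠ v) (h2 : w ≠ y) : extend v y b av ay w = b ⟨w, h1, h2⟩ := by
  simp [extend, h1, h2]

lemma adj_delContract {V : Type*} (G : SimpleGraph V) (v x y : V)
    {a b : {w : V // w ≠ v ∧ w ≠ y}} (h : G.Adj a.1 b.1) : (delContract G v x y).Adj a b := by
  rw [delContract, SimpleGraph.fromRel_adj]
  exact ⟨fun he => h.ne (congrArg Subtype.val he), Or.inl (Or.inl h)⟩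

lemma adj_delContract' {V : Type*} (G : SimpleGraph V) (v x y : V)
    {a b : {w : V // w ≠ v ∧ w ≠ y}} (hne : a ≠ b) (ha : a.1 = x) (h : G.Adj y b.1) :
    (delContract G v x y).Adj a b := by
  rw [delContract, SimpleGraph.fromRel_adj]
  exact ⟨hne, Or.inl (Or.inr ⟨ha, h⟩)⟩

lemma restrict_proper {V : Type*} (G : SimpleGraph V) (v x y : V) (c : V → Fin 4)
    (hc : ∀ a b, G.Adj a b → c a ≠ c b) (hxy : c x = c y)
    (a b : {w : V // w ≠ v ∧ w ≠ y}) (hab : (delContract G v x y).Adj a b) :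
    c a.1 ≠ c b.1 := by
  rw [delContract, SimpleGraph.fromRel_adj] at hab
  obtain ⟨hne, h | h⟩ := hab
  · rcases h with h | ⟨hx, hy⟩
    · exact hc _ _ h
    · have : c a.1 = c y := by rw [hx, hxy]
      rw [this]; exact hc _ _ hy
  · rcases h with h | ⟨hx, hy⟩
    · exact (hc _ _ h).symm
    · have : c b.1 = c y := by rw [hx, hxy]
      rw [this]; exact (hc _ _ hy).symm

theorem stmt4 {V : Type*} [Fintype V] (G : SimpleGraph V) (v v₁ v₂ v₃ v₄ : V)
    (hN : G.neighborSet v = {v₁, v₂, v₃, v₄})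
    (h12 : v₁ ≠ v₂) (h13 : v₁ ≠ v₃) (h14 : v₁ ≠ v₄)
    (h23 : v₂ ≠ v₃) (h24 : v₂ ≠ v₄) (h34 : v₃ ≠ v₄)
    (e12 : G.Adj v₁ v₂) (e23 : G.Adj v₂ v₃) (e34 : G.Adj v₃ v₄) (e41 : G.Adj v₄ v₁)
    (n13 : ¬ G.Adj v₁ v₃) (n24 : ¬ G.Adj v₂ v₄) :
    numCol G 4 = numCol (delContract G v v₁ v₃) 4 + numCol (delContract G v v₂ v₄) 4 := by
  classical
  have hadj : ∀ w, G.Adj v w ↔ (w = v₁ ∨ w = v₂ ∨ w = v₃ ∨ w = v₄) := by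
    intro w
    have h := Set.ext_iff.mp hN w
    simpa using h
  have hv1 : G.Adj v v₁ := (hadj v₁).mpr (Or.inl rfl)
  have hv2 : G.Adj v v₂ := (hadj v₂).mpr (Or.inr (Or.inl rfl))
  have hv3 : G.Adj v v₃ := (hadj v₃).mpr (Or.inr (Or.inr (Or.inl rfl)))
  have hv4 : G.Adj v v₄ := (hadj v₄).mpr (Or.inr (Or.inr (Or.inr rfl)))
  have h43 : v₄ ≠ v₃ := fun h => h34 h.symm
  let u1 : {w : V // w ≠ v ∧ w ≠ v₃} := ⟨v₁, hv1.ne', h13⟩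
  let u2 : {w : V // w ≠ v ∧ w ≠ v₃} := ⟨v₂, hv2.ne', h23⟩
  let u4 : {w : V // w ≠ v ∧ w ≠ v₃} := ⟨v₄, hv4.ne', h43⟩
  let w1 : {w : V // w ≠ v ∧ w ≠ v₄} := ⟨v₁, hv1.ne', h14⟩
  let w2 : {w : V // w ≠ v ∧ w ≠ v₄} := ⟨v₂, hv2.ne', h24⟩
  let w3 : {w : V // w ≠ v ∧ w ≠ v₄} := ⟨v₃, hv3.ne', h34⟩
  have ext1_prop : ∀ b : {w : V // w ≠ v ∧ w ≠ v₃} → Fin 4,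
      (∀ a b', (delContract G v v₁ v₃).Adj a b' → b a ≠ b b') →
      ∀ a b', G.Adj a b' →
        extend v v₃ b (pmin (b u1) (b u2) (b u4)) (b u1) a ≠
        extend v v₃ b (pmin (b u1) (b u2) (b u4)) (b u1) b' := by
    intro b hb
    set E := extend v v₃ b (pmin (b u1) (b u2) (b u4)) (b u1) with hE
    have Ev : E v = pmin (b u1) (b u2) (b u4) := extend_v _ _ _ _ _
    have E3 : E v₃ = b u1 := extend_y _ _ _ _ _ hv3.ne'
    have Eo : ∀ (w : V) (hq1 : w ≠ v) (hq2 : w ≠ v₃), E w = b ⟨w, hq1, hq2⟩ :=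
      fun w hq1 hq2 => extend_other _ _ _ _ _ w hq1 hq2
    have Hv : ∀ b', G.Adj v b' → E v ≠ E b' := by
      intro b' h
      rcases (hadj b').mp h with h' | h' | h' | h'
      · rw [h', Ev, Eo v₁ hv1.ne' h13]; exact (pmin_ne _ _ _).1
      · rw [h', Ev, Eo v₂ hv2.ne' h23]; exact (pmin_ne _ _ _).2.1
      · rw [h', Ev, E3]; exact (pmin_ne _ _ _).1
      · rw [h', Ev, Eo v₄ hv4.ne' h43]; exact (pmin_ne _ _ _).2.2
    have H3 : ∀ b', b' ≠ v → G.Adj v₃ b' → E v₃ ≠ E b' := by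
      intro b' hbv h
      have hb3 : b' ≠ v₃ := fun he => G.irrefl (he ▸ h)
      by_cases hb1 : b' = v₁
      · rw [hb1] at h; exact absurd h.symm n13
      · rw [E3, Eo b' hbv hb3]
        exact hb u1 ⟨b', hbv, hb3⟩
          (adj_delContract' G v v₁ v₃ (fun he => hb1 (congrArg Subtype.val he).symm) rfl h)
    intro a b' hab
    by_cases ha : a = v
    · rw [ha] at hab ⊢; exact Hv b' hab
    by_cases hbv : b' = v
    · rw [hbv] at hab ⊢; exact fun he => Hv a hab.symm he.symm
    by_cases ha3 : a = v₃
    · rw [ha3] at hab ⊢; exact H3 b' hbv hab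
    by_cases hb3 : b' = v₃
    · rw [hb3] at hab ⊢; exact fun he => H3 a ha hab.symm he.symm
    · rw [Eo a ha ha3, Eo b' hbv hb3]
      exact hb _ _ (adj_delContract G v v₁ v₃ hab)
  have ext2_prop : ∀ b : {w : V // w ≠ v ∧ w ≠ v₄} → Fin 4,
      (∀ a b', (delContract G v v₂ v₄).Adj a b' → b a ≠ b b') →
      ∀ a b', G.Adj a b' →
        extend v v₄ b (pmax (b w1) (b w2) (b w3)) (b w2) a ≠
        extend v v₄ b (pmax (b w1) (b w2) (b w3)) (b w2) b' := by
    intro b hb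
    set E := extend v v₄ b (pmax (b w1) (b w2) (b w3)) (b w2) with hE
    have Ev : E v = pmax (b w1) (b w2) (b w3) := extend_v _ _ _ _ _
    have E4 : E v₄ = b w2 := extend_y _ _ _ _ _ hv4.ne'
    have Eo : ∀ (w : V) (hq1 : w ≠ v) (hq2 : w ≠ v₄), E w = b ⟨w, hq1, hq2⟩ :=
      fun w hq1 hq2 => extend_other _ _ _ _ _ w hq1 hq2
    have Hv : ∀ b', G.Adj v b' → E v ≠ E b' := by
      intro b' h
      rcases (hadj b').mp h with h' | h' | h' | h'
      · rw [h', Ev, Eo v₁ hv1.ne' h14]; exact (pmax_ne _ _ _).1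
      · rw [h', Ev, Eo v₂ hv2.ne' h24]; exact (pmax_ne _ _ _).2.1
      · rw [h', Ev, Eo v₃ hv3.ne' h34]; exact (pmax_ne _ _ _).2.2
      · rw [h', Ev, E4]; exact (pmax_ne _ _ _).2.1
    have H4 : ∀ b', b' ≠ v → G.Adj v₄ b' → E v₄ ≠ E b' := by
      intro b' hbv h
      have hb4 : b' ≠ v₄ := fun he => G.irrefl (he ▸ h)
      by_cases hb2 : b' = v₂
      · rw [hb2] at h; exact absurd h.symm n24
      · rw [E4, Eo b' hbv hb4]
        exact hb w2 ⟨b', hbv, hb4⟩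
          (adj_delContract' G v v₂ v₄ (fun he => hb2 (congrArg Subtype.val he).symm) rfl h)
    intro a b' hab
    by_cases ha : a = v
    · rw [ha] at hab ⊢; exact Hv b' hab
    by_cases hbv : b' = v
    · rw [hbv] at hab ⊢; exact fun he => Hv a hab.symm he.symm
    by_cases ha4 : a = v₄
    · rw [ha4] at hab ⊢; exact H4 b' hbv hab
    by_cases hb4 : b' = v₄
    · rw [hb4] at hab ⊢; exact fun he => H4 a ha hab.symm he.symm
    · rw [Eo a ha ha4, Eo b' hbv hb4]
      exact hb _ _ (adj_delContract G v v₂ v₄ hab)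
  have hc24 : ∀ (c : V → Fin 4), (∀ a b, G.Adj a b → c a ≠ c b) →
      ¬(c v₁ = c v₃ ∧ (c v₂ = c v₄ → c v = pmin (c v₁) (c v₂) (c v₄))) → c v₂ = c v₄ := by
    intro c hc h
    by_cases h13c : c v₁ = c v₃
    · by_contra h24c
      exact h ⟨h13c, fun h' => absurd h' h24c⟩
    · rcases dichot (c v) (c v₁) (c v₂) (c v₃) (c v₄) (hc _ _ hv1) (hc _ _ hv2) (hc _ _ hv3)
        (hc _ _ hv4) (hc _ _ e12) (hc _ _ e23) (hc _ _ e34) (hc _ _ e41) with h' | h'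
      · exact absurd h' h13c
      · exact h'
  have e : {c : V → Fin 4 // ∀ a b, G.Adj a b → c a ≠ c b} ≃
      ({c : {w : V // w ≠ v ∧ w ≠ v₃} → Fin 4 //
          ∀ a b, (delContract G v v₁ v₃).Adj a b → c a ≠ c b} ⊕
       {c : {w : V // w ≠ v ∧ w ≠ v₄} → Fin 4 //
          ∀ a b, (delContract G v v₂ v₄).Adj a b → c a ≠ c b}) :=
  { toFun := fun c =>
      if h : c.1 v₁ = c.1 v₃ ∧ (c.1 v₂ = c.1 v₄ → c.1 v = pmin (c.1 v₁) (c.1 v₂) (c.1 v₄))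
      then Sum.inl ⟨fun w => c.1 w.1,
        fun a b hab => restrict_proper G v v₁ v₃ c.1 c.2 h.1 a b hab⟩
      else Sum.inr ⟨fun w => c.1 w.1,
        fun a b hab => restrict_proper G v v₂ v₄ c.1 c.2 (hc24 c.1 c.2 h) a b hab⟩,
    invFun := fun s => Sum.rec
      (fun b => ⟨extend v v₃ b.1 (pmin (b.1 u1) (b.1 u2) (b.1 u4)) (b.1 u1),
        ext1_prop b.1 b.2⟩)
      (fun b => ⟨extend v v₄ b.1 (pmax (b.1 w1) (b.1 w2) (b.1 w3)) (b.1 w2),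
        ext2_prop b.1 b.2⟩) s,
    left_inv := by
      intro c
      by_cases h : c.1 v₁ = c.1 v₃ ∧ (c.1 v₂ = c.1 v₄ → c.1 v = pmin (c.1 v₁) (c.1 v₂) (c.1 v₄))
      · simp only [dif_pos h]
        apply Subtype.ext
        funext z
        show extend v v₃ (fun w => c.1 w.1)
          (pmin (c.1 v₁) (c.1 v₂) (c.1 v₄)) (c.1 v₁) z = c.1 z
        by_cases hz : z = v
        · rw [hz, extend_v]
          by_cases h24c : c.1 v₂ = c.1 v₄
          · exact (h.2 h24c).symm
          · exact pmin_eq _ _ _ _ (c.2 _ _ e12) (fun he => c.2 _ _ e41 he.symm) h24c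
              (c.2 _ _ hv1) (c.2 _ _ hv2) (c.2 _ _ hv4)
        · by_cases hz3 : z = v₃
          · rw [hz3, extend_y _ _ _ _ _ hv3.ne']
            exact h.1
          · rw [extend_other _ _ _ _ _ z hz hz3]
      · simp only [dif_neg h]
        have h24c : c.1 v₂ = c.1 v₄ := hc24 c.1 c.2 h
        apply Subtype.ext
        funext z
        show extend v v₄ (fun w => c.1 w.1)
          (pmax (c.1 v₁) (c.1 v₂) (c.1 v₃)) (c.1 v₂) z = c.1 z
        by_cases hz : z = v
        · rw [hz, extend_v]
          by_cases h13c : c.1 v₁ = c.1 v₃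
          · have h'' : ¬(c.1 v₂ = c.1 v₄ → c.1 v = pmin (c.1 v₁) (c.1 v₂) (c.1 v₄)) :=
              fun hq => h ⟨h13c, hq⟩
            push_neg at h''
            have hne : c.1 v ≠ pmin (c.1 v₁) (c.1 v₂) (c.1 v₂) := by
              have := h''.2
              rwa [← h''.1] at this
            rw [← h13c]
            exact pmax_eq2 _ _ _ (c.2 _ _ e12) (c.2 _ _ hv1) (c.2 _ _ hv2) hne
          · exact pmax_eq _ _ _ _ (c.2 _ _ e12) h13c (c.2 _ _ e23)
              (c.2 _ _ hv1) (c.2 _ _ hv2) (c.2 _ _ hv3)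
        · by_cases hz4 : z = v₄
          · rw [hz4, extend_y _ _ _ _ _ hv4.ne']
            exact h24c
          · rw [extend_other _ _ _ _ _ z hz hz4],
    right_inv := by
      intro s
      rcases s with b | b
      · set E : V → Fin 4 := extend v v₃ b.1 (pmin (b.1 u1) (b.1 u2) (b.1 u4)) (b.1 u1)
          with hEdef
        have hV1 : extend v v₃ b.1 (pmin (b.1 u1) (b.1 u2) (b.1 u4)) (b.1 u1) v₁ = b.1 u1 :=
          extend_other _ _ _ _ _ v₁ hv1.ne' h13
        have hV3 : extend v v₃ b.1 (pmin (b.1 u1) (b.1 u2) (b.1 u4)) (b.1 u1) v₃ = b.1 u1 :=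
          extend_y _ _ _ _ _ hv3.ne'
        have hV2 : extend v v₃ b.1 (pmin (b.1 u1) (b.1 u2) (b.1 u4)) (b.1 u1) v₂ = b.1 u2 :=
          extend_other _ _ _ _ _ v₂ hv2.ne' h23
        have hV4 : extend v v₃ b.1 (pmin (b.1 u1) (b.1 u2) (b.1 u4)) (b.1 u1) v₄ = b.1 u4 :=
          extend_other _ _ _ _ _ v₄ hv4.ne' h43
        have hVv : extend v v₃ b.1 (pmin (b.1 u1) (b.1 u2) (b.1 u4)) (b.1 u1) v =
            pmin (b.1 u1) (b.1 u2) (b.1 u4) := extend_v _ _ _ _ _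
        rw [← hEdef] at hV1 hV2 hV3 hV4 hVv
        refine Eq.trans (dif_pos ?_) ?_
        · show E v₁ = E v₃ ∧ (E v₂ = E v₄ → E v = pmin (E v₁) (E v₂) (E v₄))
          rw [hV1, hV3, hV2, hV4, hVv]; exact ⟨rfl, fun _ => rfl⟩
        congr 1
        apply Subtype.ext
        funext z
        show E z.1 = b.1 z
        rw [hEdef, extend_other _ _ _ _ _ z.1 z.2.1 z.2.2]
      · set E : V → Fin 4 := extend v v₄ b.1 (pmax (b.1 w1) (b.1 w2) (b.1 w3)) (b.1 w2)
          with hEdef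
        have hV1 : extend v v₄ b.1 (pmax (b.1 w1) (b.1 w2) (b.1 w3)) (b.1 w2) v₁ = b.1 w1 :=
          extend_other _ _ _ _ _ v₁ hv1.ne' h14
        have hV2 : extend v v₄ b.1 (pmax (b.1 w1) (b.1 w2) (b.1 w3)) (b.1 w2) v₂ = b.1 w2 :=
          extend_other _ _ _ _ _ v₂ hv2.ne' h24
        have hV3 : extend v v₄ b.1 (pmax (b.1 w1) (b.1 w2) (b.1 w3)) (b.1 w2) v₃ = b.1 w3 :=
          extend_other _ _ _ _ _ v₃ hv3.ne' h34
        have hV4 : extend v v₄ b.1 (pmax (b.1 w1) (b.1 w2) (b.1 w3)) (b.1 w2) v₄ = b.1 w2 :=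
          extend_y _ _ _ _ _ hv4.ne'
        have hVv : extend v v₄ b.1 (pmax (b.1 w1) (b.1 w2) (b.1 w3)) (b.1 w2) v =
            pmax (b.1 w1) (b.1 w2) (b.1 w3) := extend_v _ _ _ _ _
        have hne12 : b.1 w1 ≠ b.1 w2 := b.2 w1 w2 (adj_delContract G v v₂ v₄ e12)
        rw [← hEdef] at hV1 hV2 hV3 hV4 hVv
        refine Eq.trans (dif_neg ?_) ?_
        · show ¬(E v₁ = E v₃ ∧ (E v₂ = E v₄ → E v = pmin (E v₁) (E v₂) (E v₄)))
          rw [hV1, hV3, hV2, hV4, hVv]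
          rintro ⟨hq1, hq2⟩
          have hq3 := hq2 rfl
          rw [← hq1] at hq3
          exact pmax_ne_pmin _ _ hne12 hq3
        congr 1
        apply Subtype.ext
        funext z
        show E z.1 = b.1 z
        rw [hEdef, extend_other _ _ _ _ _ z.1 z.2.1 z.2.2] }
  have hcard := Nat.card_congr e
  rw [Nat.card_sum] at hcard
  exact hcard
end

section
/- Let v be a degree-5 vertex of a graph G whose neighborhood is the 5-cycle v₁v₂v₃v₄v₅v₁, with no chords of this cycle present in G. Then f(G,4) = [f(G₁,4) − f(G₁ + {v₁v₄, v₁v₃},4)] + [f(G₂,4) − f(G₂ + {v₃v₁, v₃v₅},4)] + [f(G₃,4) − f(G₃ + {v₁v₄},4)], where G₁ = (G−v)∘{v₂,v₅}, G₂ = (G−v)∘{v₂,v₄}, G₃ = (G−v)∘{v₃,v₅}, '∘' denotes identification of two nonadjacent vertices, and '+' denotes adding edges. -/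
open SimpleGraph

/-!
Every 4-colouring of `G` restricts to a colouring `c` of `G - v`, and `c` extends to `v` in as
many ways as there are colours missing from `c(N(v))`. The colourings of `(G - v)∘{x, y}`, with
or without added edges, are the colourings `c` of `G - v` with `c x = c y` (that respect the
added edges). So all seven counts are sums over the colourings of `G - v`, and the identity
holds summand by summand, where only the five colours on the pentagon `v₁ ⋯ v₅` matter. A proper
colouring of the pentagon leaves a colour free for `v` iff it uses three colours, i.e. iff it
makes both pairs of exactly one of `{25, 14}, {25, 13}, {24, 13}, {24, 35}, {35, 14}`
monochromatic; the three brackets count the first two, the next two and the last one.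
-/

open Finset

section Coloring

variable {W α : Type*}

def IsProperColoring (H : SimpleGraph W) (c : W → α) : Prop :=
  ∀ a b, H.Adj a b → c a ≠ c b

lemma numCol_eq_natCard (H : SimpleGraph W) (t : ℕ) :
    numCol H t = Nat.card {c : W → Fin t // IsProperColoring H c} :=
  rfl

lemma isProperColoring_addEdge {H : SimpleGraph W} {x y : W} (hxy : x ≠ y) {c : W → α} :
    IsProperColoring (addEdge H x y) c ↔ IsProperColoring H c ∧ c x ≠ c y := by
  refine ⟨fun h => ⟨fun a b hab => h a b (Or.inl hab), h x y ?_⟩, ?_⟩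
  · simp [addEdge, hxy]
  · rintro ⟨h, hc⟩ a b hab
    simp only [addEdge, sup_adj, fromEdgeSet_adj, Set.mem_singleton_iff, Sym2.eq_iff] at hab
    rcases hab with hab | ⟨⟨rfl, rfl⟩ | ⟨rfl, rfl⟩, -⟩
    exacts [h a b hab, hc, hc.symm]

lemma numCol_addEdge (H : SimpleGraph W) {x y : W} (hxy : x ≠ y) (t : ℕ) :
    numCol (addEdge H x y) t = Nat.card {c : W → Fin t // IsProperColoring H c ∧ c x ≠ c y} :=
  Nat.card_congr (Equiv.subtypeEquivRight fun _ => isProperColoring_addEdge hxy)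

open scoped Classical in
lemma natCard_isProperColoring_and [Fintype W] [DecidableEq W] [Fintype α] [DecidableEq α]
    (H : SimpleGraph W) (R : (W → α) → Prop) [DecidablePred R] :
    Nat.card {c // IsProperColoring H c ∧ R c} =
      ∑ c ∈ univ.filter (IsProperColoring H), if R c then 1 else 0 := by
  rw [Nat.card_eq_fintype_card, Fintype.card_subtype, sum_boole, filter_filter]
  simp

end Coloring

open scoped Classical in
lemma numCol_eq_sum_card_avoid {V : Type*} [Fintype V] (G : SimpleGraph V) (v : V) (t : ℕ) :
    numCol G t = ∑ c ∈ univ.filter (IsProperColoring (G.induce {w | w ≠ v})),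
      #{a : Fin t | ∀ u : {w // w ≠ v}, G.Adj v u → a ≠ c u} := by
  have split (c : V → Fin t) : IsProperColoring G c ↔
      IsProperColoring (G.induce {w | w ≠ v}) (fun u => c u) ∧
        ∀ u : {w // w ≠ v}, G.Adj v u → c v ≠ c u := by
    refine ⟨fun h => ⟨fun a b hab => h a b hab, fun u hu => h v u hu⟩, ?_⟩
    rintro ⟨h, hv⟩ a b hab
    by_cases ha : a = v
    · subst ha; exact hv ⟨b, hab.ne'⟩ hab
    by_cases hb : b = v
    · subst hb; exact (hv ⟨a, ha⟩ hab.symm).symm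
    exact h ⟨a, ha⟩ ⟨b, hb⟩ hab
  rw [numCol_eq_natCard, Nat.card_congr (Equiv.subtypeEquiv (Equiv.piSplitAt v _) (q := fun p =>
      IsProperColoring (G.induce {w | w ≠ v}) p.2 ∧ ∀ u : {w // w ≠ v}, G.Adj v u → p.1 ≠ p.2 u)
      split),
    Nat.card_eq_fintype_card, Fintype.card_subtype, card_filter, Fintype.sum_prod_type_right,
    sum_filter]
  refine sum_congr rfl fun c _ => ?_
  by_cases hc : IsProperColoring (G.induce {w | w ≠ v}) c
  · simp only [hc, if_true, true_and, card_filter]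
  · simp [hc]

section DelContract

variable {V : Type*} [DecidableEq V] (G : SimpleGraph V) {v x y : V}

def mergeInto (hx : x ≠ v) (hxy : x ≠ y) (w : {w // w ≠ v}) : {w // w ≠ v ∧ w ≠ y} :=
  if h : w.1 = y then ⟨x, hx, hxy⟩ else ⟨w.1, w.2, h⟩

lemma mergeInto_of_ne (hx : x ≠ v) (hxy : x ≠ y) (w : {w // w ≠ v ∧ w ≠ y}) :
    mergeInto hx hxy ⟨w.1, w.2.1⟩ = w :=
  dif_neg w.2.2

lemma delContract_adj_mergeInto (hx : x ≠ v) (hxy : x ≠ y) (hna : ¬ G.Adj x y)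
    {a b : {w // w ≠ v}} (hab : G.Adj a b) :
    (delContract G v x y).Adj (mergeInto hx hxy a) (mergeInto hx hxy b) := by
  simp only [delContract, fromRel_adj, mergeInto]
  by_cases ha : a.1 = y <;> by_cases hb : b.1 = y <;> simp only [ha, hb, dite_true, dite_false]
  · exact absurd (ha.trans hb.symm) hab.ne
  · rw [ha] at hab
    exact ⟨fun h => hna (by rw [Subtype.mk.inj h]; exact hab.symm), Or.inl (Or.inr ⟨trivial, hab⟩)⟩
  · rw [hb] at hab
    exact ⟨fun h => hna (by rw [← Subtype.mk.inj h]; exact hab), Or.inr (Or.inr ⟨trivial, hab.symm⟩)⟩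
  · exact ⟨fun h => hab.ne (Subtype.mk.inj h), Or.inl (Or.inl hab)⟩

open scoped Classical in
lemma natCard_delContract [Fintype V] (hx : x ≠ v) (hy : y ≠ v) (hxy : x ≠ y) (hna : ¬ G.Adj x y)
    {t : ℕ} (Q : ({w // w ≠ v ∧ w ≠ y} → Fin t) → Prop) :
    Nat.card {d // IsProperColoring (delContract G v x y) d ∧ Q d} =
      ∑ c ∈ univ.filter (IsProperColoring (G.induce {w | w ≠ v})),
        if c ⟨x, hx⟩ = c ⟨y, hy⟩ ∧ Q (fun w => c ⟨w.1, w.2.1⟩) then 1 else 0 := by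
  have restrict_merge (d : {w // w ≠ v ∧ w ≠ y} → Fin t) :
      (fun w => d (mergeInto hx hxy ⟨w.1, w.2.1⟩)) = d :=
    funext fun w => congrArg d (mergeInto_of_ne hx hxy w)
  rw [← natCard_isProperColoring_and]
  refine Nat.card_congr
    { toFun := fun d => ⟨d.1 ∘ mergeInto hx hxy,
        fun a b hab => d.2.1 _ _ (delContract_adj_mergeInto G hx hxy hna hab), ?_,
        (restrict_merge d.1).symm ▸ d.2.2⟩
      invFun := fun c => ⟨fun w => c.1 ⟨w.1, w.2.1⟩, ?_, c.2.2.2⟩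
      left_inv := fun d => Subtype.ext (restrict_merge d.1)
      right_inv := ?_ }
  · simp [mergeInto, hxy]
  · rintro a b ⟨-, (hab | ⟨hax, hyb⟩) | (hba | ⟨hbx, hya⟩)⟩
    · exact c.2.1 ⟨a.1, a.2.1⟩ ⟨b.1, b.2.1⟩ hab
    · show c.1 ⟨a.1, a.2.1⟩ ≠ c.1 ⟨b.1, b.2.1⟩
      rw [show (⟨a.1, a.2.1⟩ : {w // w ≠ v}) = ⟨x, hx⟩ from Subtype.ext hax, c.2.2.1]
      exact c.2.1 ⟨y, hy⟩ ⟨b.1, b.2.1⟩ hyb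
    · exact (c.2.1 ⟨b.1, b.2.1⟩ ⟨a.1, a.2.1⟩ hba).symm
    · show c.1 ⟨a.1, a.2.1⟩ ≠ c.1 ⟨b.1, b.2.1⟩
      rw [show (⟨b.1, b.2.1⟩ : {w // w ≠ v}) = ⟨x, hx⟩ from Subtype.ext hbx, c.2.2.1]
      exact (c.2.1 ⟨y, hy⟩ ⟨a.1, a.2.1⟩ hya).symm
  · rintro ⟨c, hc, hxyc, -⟩
    refine Subtype.ext (funext fun w => ?_)
    by_cases hw : w.1 = y
    · simp only [Function.comp, mergeInto, hw, dite_true]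
      rw [hxyc]
      exact congrArg c (Subtype.ext hw.symm)
    · simp only [Function.comp, mergeInto, hw, dite_false]

open scoped Classical in
lemma numCol_delContract [Fintype V] (hx : x ≠ v) (hy : y ≠ v) (hxy : x ≠ y)
    (hna : ¬ G.Adj x y) (t : ℕ) :
    numCol (delContract G v x y) t =
      ∑ c ∈ univ.filter (IsProperColoring (α := Fin t) (G.induce {w | w ≠ v})),
        if c ⟨x, hx⟩ = c ⟨y, hy⟩ then 1 else 0 := by
  rw [numCol_eq_natCard]
  simpa only [and_true] using natCard_delContract G hx hy hxy hna (t := t) fun _ => True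

end DelContract

lemma card_avoid_pentagon : ∀ a₁ a₂ a₃ a₄ a₅ : Fin 4,
    a₁ ≠ a₂ → a₂ ≠ a₃ → a₃ ≠ a₄ → a₄ ≠ a₅ → a₅ ≠ a₁ →
    (#{a | a ≠ a₁ ∧ a ≠ a₂ ∧ a ≠ a₃ ∧ a ≠ a₄ ∧ a ≠ a₅} : ℤ) =
      ((if a₂ = a₅ then 1 else 0) - if a₂ = a₅ ∧ a₁ ≠ a₄ ∧ a₁ ≠ a₃ then 1 else 0) +
      ((if a₂ = a₄ then 1 else 0) - if a₂ = a₄ ∧ a₃ ≠ a₁ ∧ a₃ ≠ a₅ then 1 else 0) +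
      ((if a₃ = a₅ then 1 else 0) - if a₃ = a₅ ∧ a₁ ≠ a₄ then 1 else 0) := by
  decide

theorem stmt12_general {V : Type*} [Fintype V] (G : SimpleGraph V) (v v₁ v₂ v₃ v₄ v₅ : V)
    (hN : G.neighborSet v = {v₁, v₂, v₃, v₄, v₅})
    (hv1 : G.Adj v v₁) (hv2 : G.Adj v v₂) (hv3 : G.Adj v v₃)
    (hv4 : G.Adj v v₄) (hv5 : G.Adj v v₅)
    (h13 : v₁ ≠ v₃) (h14 : v₁ ≠ v₄) (h15 : v₁ ≠ v₅)
    (h24 : v₂ ≠ v₄) (h25 : v₂ ≠ v₅)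
    (h34 : v₃ ≠ v₄) (h35 : v₃ ≠ v₅) (h45 : v₄ ≠ v₅)
    (e12 : G.Adj v₁ v₂) (e23 : G.Adj v₂ v₃) (e34 : G.Adj v₃ v₄)
    (e45 : G.Adj v₄ v₅) (e51 : G.Adj v₅ v₁)
    (n24 : ¬ G.Adj v₂ v₄)
    (n25 : ¬ G.Adj v₂ v₅) (n35 : ¬ G.Adj v₃ v₅) :
    (numCol G 4 : ℤ) =
      ((numCol (delContract G v v₂ v₅) 4 : ℤ) -
        (numCol (addEdge (addEdge (delContract G v v₂ v₅) ⟨v₁, hv1.ne', h15⟩ ⟨v₄, hv4.ne', h45⟩)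
          ⟨v₁, hv1.ne', h15⟩ ⟨v₃, hv3.ne', h35⟩) 4 : ℤ)) +
      ((numCol (delContract G v v₂ v₄) 4 : ℤ) -
        (numCol (addEdge (addEdge (delContract G v v₂ v₄) ⟨v₃, hv3.ne', h34⟩ ⟨v₁, hv1.ne', h14⟩)
          ⟨v₃, hv3.ne', h34⟩ ⟨v₅, hv5.ne', h45.symm⟩) 4 : ℤ)) +
      ((numCol (delContract G v v₃ v₅) 4 : ℤ) -
        (numCol (addEdge (delContract G v v₃ v₅) ⟨v₁, hv1.ne', h15⟩ ⟨v₄, hv4.ne', h45⟩) 4 : ℤ)) := by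
  classical
  simp (disch := simp [h13, h14, h35, h13.symm]) only [numCol_addEdge, isProperColoring_addEdge,
    and_assoc]
  rw [natCard_delContract G hv2.ne' hv5.ne' h25 n25, natCard_delContract G hv2.ne' hv4.ne' h24 n24,
    natCard_delContract G hv3.ne' hv5.ne' h35 n35, numCol_delContract G hv2.ne' hv5.ne' h25 n25,
    numCol_delContract G hv2.ne' hv4.ne' h24 n24, numCol_delContract G hv3.ne' hv5.ne' h35 n35,
    numCol_eq_sum_card_avoid G v]
  push_cast
  rw [← sum_sub_distrib, ← sum_sub_distrib, ← sum_sub_distrib, ← sum_add_distrib,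
    ← sum_add_distrib]
  refine sum_congr rfl fun c hmem => ?_
  have hc : IsProperColoring _ c := (mem_filter.1 hmem).2
  have avoid (a : Fin 4) : (∀ u : {w // w ≠ v}, G.Adj v u → a ≠ c u) ↔ a ≠ c ⟨v₁, hv1.ne'⟩ ∧
      a ≠ c ⟨v₂, hv2.ne'⟩ ∧ a ≠ c ⟨v₃, hv3.ne'⟩ ∧ a ≠ c ⟨v₄, hv4.ne'⟩ ∧ a ≠ c ⟨v₅, hv5.ne'⟩ := by
    refine ⟨fun h => ⟨h _ hv1, h _ hv2, h _ hv3, h _ hv4, h _ hv5⟩, ?_⟩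
    rintro ⟨h1, h2, h3, h4, h5⟩ ⟨u, hu⟩ hvu
    rw [← mem_neighborSet, hN] at hvu
    rcases hvu with rfl | rfl | rfl | rfl | rfl
    exacts [h1, h2, h3, h4, h5]
  rw [filter_congr fun a _ => avoid a]
  exact card_avoid_pentagon _ _ _ _ _ (hc _ _ e12) (hc _ _ e23) (hc _ _ e34) (hc _ _ e45)
    (hc _ _ e51)

theorem stmt12 {V : Type*} [Fintype V] (G : SimpleGraph V) (v v₁ v₂ v₃ v₄ v₅ : V)
    (hN : G.neighborSet v = {v₁, v₂, v₃, v₄, v₅})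
    (hv1 : G.Adj v v₁) (hv2 : G.Adj v v₂) (hv3 : G.Adj v v₃)
    (hv4 : G.Adj v v₄) (hv5 : G.Adj v v₅)
    (h12 : v₁ ≠ v₂) (h13 : v₁ ≠ v₃) (h14 : v₁ ≠ v₄) (h15 : v₁ ≠ v₅)
    (h23 : v₂ ≠ v₃) (h24 : v₂ ≠ v₄) (h25 : v₂ ≠ v₅)
    (h34 : v₃ ≠ v₄) (h35 : v₃ ≠ v₅) (h45 : v₄ ≠ v₅)
    (e12 : G.Adj v₁ v₂) (e23 : G.Adj v₂ v₃) (e34 : G.Adj v₃ v₄)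
    (e45 : G.Adj v₄ v₅) (e51 : G.Adj v₅ v₁)
    (n13 : ¬ G.Adj v₁ v₃) (n14 : ¬ G.Adj v₁ v₄) (n24 : ¬ G.Adj v₂ v₄)
    (n25 : ¬ G.Adj v₂ v₅) (n35 : ¬ G.Adj v₃ v₅) :
    (numCol G 4 : ℤ) =
      ((numCol (delContract G v v₂ v₅) 4 : ℤ) -
        (numCol (addEdge (addEdge (delContract G v v₂ v₅) ⟨v₁, hv1.ne', h15⟩ ⟨v₄, hv4.ne', h45⟩)
          ⟨v₁, hv1.ne', h15⟩ ⟨v₃, hv3.ne', h35⟩) 4 : ℤ)) +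
      ((numCol (delContract G v v₂ v₄) 4 : ℤ) -
        (numCol (addEdge (addEdge (delContract G v v₂ v₄) ⟨v₃, hv3.ne', h34⟩ ⟨v₁, hv1.ne', h14⟩)
          ⟨v₃, hv3.ne', h34⟩ ⟨v₅, hv5.ne', h45.symm⟩) 4 : ℤ)) +
      ((numCol (delContract G v v₃ v₅) 4 : ℤ) -
        (numCol (addEdge (delContract G v v₃ v₅) ⟨v₁, hv1.ne', h15⟩ ⟨v₄, hv4.ne', h45⟩) 4 : ℤ)) :=
  stmt12_general G v v₁ v₂ v₃ v₄ v₅ hN hv1 hv2 hv3 hv4 hv5 h13 h14 h15 h24 h25 h34 h35 h45 e12 e23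
    e34 e45 e51 n24 n25 n35
end

section
/- Let G be a graph with a degree-4 vertex v whose neighborhood induces the 4-cycle v₁v₂v₃v₄v₁ (diagonals absent). If both graphs (G−v)∘{v₁,v₃} and (G−v)∘{v₂,v₄} are 4-colorable, then G is 4-colorable. -/
open SimpleGraph

theorem stmt17 {V : Type*} [Fintype V] (G : SimpleGraph V) (v v₁ v₂ v₃ v₄ : V)
    (hN : G.neighborSet v = {v₁, v₂, v₃, v₄})
    (h12 : v₁ ≠ v₂) (h13 : v₁ ≠ v₃) (h14 : v₁ ≠ v₄)
    (h23 : v₂ ≠ v₃) (h24 : v₂ ≠ v₄) (h34 : v₃ ≠ v₄)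
    (e12 : G.Adj v₁ v₂) (e23 : G.Adj v₂ v₃) (e34 : G.Adj v₃ v₄) (e41 : G.Adj v₄ v₁)
    (n13 : ¬ G.Adj v₁ v₃) (n24 : ¬ G.Adj v₂ v₄)
    (hc1 : (delContract G v v₁ v₃).Colorable 4)
    (hc2 : (delContract G v v₂ v₄).Colorable 4) :
    G.Colorable 4 := by
  classical
  -- basic facts: the vᵢ are neighbors of v
  have hmem : ∀ w, w ∈ ({v₁, v₂, v₃, v₄} : Set V) → G.Adj v w := by
    intro w hw
    rw [← hN] at hw
    exact hw
  have a1 : G.Adj v v₁ := hmem v₁ (by simp)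
  have a2 : G.Adj v v₂ := hmem v₂ (by simp)
  have a3 : G.Adj v v₃ := hmem v₃ (by simp)
  have a4 : G.Adj v v₄ := hmem v₄ (by simp)
  have hv1 : v₁ ≠ v := a1.ne'
  have hv2 : v₂ ≠ v := a2.ne'
  have hv4 : v₄ ≠ v := a4.ne'
  obtain ⟨c⟩ := hc1
  set p1 : {w : V // w ≠ v ∧ w ≠ v₃} := ⟨v₁, hv1, h13⟩ with hp1
  set p2 : {w : V // w ≠ v ∧ w ≠ v₃} := ⟨v₂, hv2, h23⟩ with hp2
  set p4 : {w : V // w ≠ v ∧ w ≠ v₃} := ⟨v₄, hv4, Ne.symm h34⟩ with hp4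
  -- pick a color for v avoiding the colors of the neighbors
  have hx : ∃ x : Fin 4, x ≠ c p1 ∧ x ≠ c p2 ∧ x ≠ c p4 := by
    have : ∀ a b d : Fin 4, ∃ x : Fin 4, x ≠ a ∧ x ≠ b ∧ x ≠ d := by decide
    exact this _ _ _
  obtain ⟨x, hx1, hx2, hx4⟩ := hx
  -- the extended coloring
  let f : V → Fin 4 := fun w =>
    if h : w = v then x else if h3 : w = v₃ then c p1 else c ⟨w, h, h3⟩
  have fv : f v = x := by simp [f]
  have fnv : ∀ w (h : w ≠ v) (h3 : w ≠ v₃), f w = c ⟨w, h, h3⟩ := by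
    intro w h h3; simp [f, h, h3]
  have fv3 : f v₃ = c p1 := by simp [f, a3.ne']
  -- colors of neighbors of v are among {c p1, c p2, c p4}
  have hnbr : ∀ w, G.Adj v w → f w = c p1 ∨ f w = c p2 ∨ f w = c p4 := by
    intro w hw
    have : w ∈ ({v₁, v₂, v₃, v₄} : Set V) := hN ▸ hw
    simp only [Set.mem_insert_iff, Set.mem_singleton_iff] at this
    rcases this with rfl | rfl | rfl | rfl
    · exact Or.inl (fnv _ hv1 h13)
    · exact Or.inr (Or.inl (fnv _ hv2 h23))
    · exact Or.inl fv3
    · exact Or.inr (Or.inr (fnv _ hv4 (Ne.symm h34)))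
  -- properness for edges not touching v
  have key : ∀ a b, G.Adj a b → a ≠ v → b ≠ v → f a ≠ f b := by
    intro a b hab ha hb
    by_cases ha3 : a = v₃
    · rw [ha3] at hab ⊢
      by_cases hb3 : b = v₃
      · exact absurd hb3.symm hab.ne
      · rw [fv3, fnv b hb hb3]
        have hb1 : v₁ ≠ b := by
          rintro rfl; exact n13 hab.symm
        have hadj : (delContract G v v₁ v₃).Adj p1 ⟨b, hb, hb3⟩ := by
          refine ⟨fun h => hb1 (congrArg Subtype.val h), Or.inl (Or.inr ⟨rfl, hab⟩)⟩
        exact c.valid hadj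
    · by_cases hb3 : b = v₃
      · rw [hb3] at hab ⊢
        rw [fv3, fnv a ha ha3]
        have ha1 : v₁ ≠ a := by
          rintro rfl; exact n13 hab
        have hadj : (delContract G v v₁ v₃).Adj p1 ⟨a, ha, ha3⟩ := by
          refine ⟨fun h => ha1 (congrArg Subtype.val h), Or.inl (Or.inr ⟨rfl, hab.symm⟩)⟩
        exact (c.valid hadj).symm
      · rw [fnv a ha ha3, fnv b hb hb3]
        have hadj : (delContract G v v₁ v₃).Adj ⟨a, ha, ha3⟩ ⟨b, hb, hb3⟩ := by
          refine ⟨fun h => hab.ne (congrArg Subtype.val h), Or.inl (Or.inl hab)⟩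
        exact c.valid hadj
  refine ⟨SimpleGraph.Coloring.mk f ?_⟩
  intro a b hab
  by_cases ha : a = v
  · subst ha
    rw [fv]
    rcases hnbr b hab with h | h | h <;> rw [h] <;> assumption
  · by_cases hb : b = v
    · subst hb
      rw [fv]
      rcases hnbr a hab.symm with h | h | h <;> rw [h]
      exacts [hx1.symm, hx2.symm, hx4.symm]
    · exact key a b hab ha hb
end

section
/- Let v be a degree-5 vertex of a 4-colorable graph G with neighborhood cycle v₁v₂v₃v₄v₅v₁ (chords absent). Then at least one of the graphs G₁=(G−v)∘{v₂,v₅}, G₂=(G−v)∘{v₂,v₄}, G₃=(G−v)∘{v₃,v₅} admits a proper 4-coloring in which the images of the corresponding funnel vertices do not receive 4 pairwise distinct colors; specifically, there is a proper 4-coloring c of G−v with c(v₂)=c(v₅) and (c(v₁)=c(v₃) or c(v₁)=c(v₄)), or c(v₂)=c(v₄) and (c(v₃)=c(v₁) or c(v₃)=c(v₅)), or c(v₃)=c(v₅) and c(v₁)=c(v₄). -/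
open SimpleGraph

set_option maxHeartbeats 1000000 in
set_option synthInstance.maxSize 400 in
lemma fin4_aux : ∀ a x1 x2 x3 x4 x5 : Fin 4, x1 ≠ a → x2 ≠ a → x3 ≠ a → x4 ≠ a →
    x5 ≠ a → x1 ≠ x2 → x2 ≠ x3 → x3 ≠ x4 → x4 ≠ x5 → x5 ≠ x1 →
    ((x2 = x5 ∧ (x1 = x3 ∨ x1 = x4)) ∨ (x2 = x4 ∧ (x3 = x1 ∨ x3 = x5)) ∨
     (x3 = x5 ∧ x1 = x4)) := by decide

theorem stmt18 {V : Type*} [Fintype V] (G : SimpleGraph V) (v v₁ v₂ v₃ v₄ v₅ : V)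
    (hN : G.neighborSet v = {v₁, v₂, v₃, v₄, v₅})
    (h12 : v₁ ≠ v₂) (h13 : v₁ ≠ v₃) (h14 : v₁ ≠ v₄) (h15 : v₁ ≠ v₅)
    (h23 : v₂ ≠ v₃) (h24 : v₂ ≠ v₄) (h25 : v₂ ≠ v₅)
    (h34 : v₃ ≠ v₄) (h35 : v₃ ≠ v₅) (h45 : v₄ ≠ v₅)
    (e12 : G.Adj v₁ v₂) (e23 : G.Adj v₂ v₃) (e34 : G.Adj v₃ v₄)
    (e45 : G.Adj v₄ v₅) (e51 : G.Adj v₅ v₁)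
    (n13 : ¬ G.Adj v₁ v₃) (n14 : ¬ G.Adj v₁ v₄) (n24 : ¬ G.Adj v₂ v₄)
    (n25 : ¬ G.Adj v₂ v₅) (n35 : ¬ G.Adj v₃ v₅)
    (hcol : G.Colorable 4) :
    ∃ c : V → Fin 4, (∀ a b, G.Adj a b → a ≠ v → b ≠ v → c a ≠ c b) ∧
      ((c v₂ = c v₅ ∧ (c v₁ = c v₃ ∨ c v₁ = c v₄)) ∨
       (c v₂ = c v₄ ∧ (c v₃ = c v₁ ∨ c v₃ = c v₅)) ∨
       (c v₃ = c v₅ ∧ c v₁ = c v₄)) := by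
  obtain ⟨c⟩ := hcol
  have hadj : ∀ w, w ∈ ({v₁, v₂, v₃, v₄, v₅} : Set V) → G.Adj v w := by
    intro w hw; rw [← hN] at hw; exact hw
  have a1 := hadj v₁ (by simp)
  have a2 := hadj v₂ (by simp)
  have a3 := hadj v₃ (by simp)
  have a4 := hadj v₄ (by simp)
  have a5 := hadj v₅ (by simp)
  refine ⟨c, fun a b h _ _ => c.valid h, ?_⟩
  exact fin4_aux (c v) (c v₁) (c v₂) (c v₃) (c v₄) (c v₅)
    (c.valid a1.symm) (c.valid a2.symm) (c.valid a3.symm) (c.valid a4.symm)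
    (c.valid a5.symm) (c.valid e12) (c.valid e23) (c.valid e34) (c.valid e45)
    (c.valid e51)
end
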